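/- Let $n, \tilde{n}, d, p$ be integers with $0 \le d < \min\{n,\tilde{n}\}$ and $0 \le p \le \min\{n,\tilde{n}\} - d$. Then there exists a bijection $\Phi$ between $\bar{\mathcal{S}}_{\le p}(n,d)$ and $\bar{\mathcal{S}}_{\le p}(\tilde{n},d)$ such that for all $\sigma, \sigma' \in \bar{\mathcal{S}}_{\le p}(n,d)$ one has $\sigma \preceq_{\bar{\mathcal{S}}} \sigma'$ if and only if $\Phi(\sigma) \preceq_{\bar{\mathcal{S}}} \Phi(\sigma')$. -/

import Mathlib

/-! Common definitions: signotopes and co-signotopes on `[n] = {1, …, n}` (encoded as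
`Finset.Icc 1 n` in `ℕ`), sign functions are `Finset ℕ → Bool` (`true` = `+`, `false` = `-`)
that vanish (are `-`) away from the relevant subsets. -/

open Classical in
/-- The sign function with `+`-set `S` (and `-` elsewhere). -/
noncomputable def ofPlusSet (S : Set (Finset ℕ)) : Finset ℕ → Bool :=
  fun A => if A ∈ S then true else false

/-- Number of sign changes in a list of signs. -/
def signChanges (l : List Bool) : ℕ :=
  ((l.zip l.tail).filter fun p => p.1 ≠ p.2).length

/-- Number of `+`-subsets of a sign function. -/
noncomputable def plusCount (τ : Finset ℕ → Bool) : ℕ :=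
  {A : Finset ℕ | τ A = true}.ncard

/-- The series of signs `τ (C ∪ {x})` for `x ∈ [n] \ C` in increasing order.
For a `d`-subset `B` with `i`-th smallest element `b`, `series n τ (B.erase b)` is
the `(τ,B,i)`-series. -/
def series (n : ℕ) (τ : Finset ℕ → Bool) (C : Finset ℕ) : List Bool :=
  ((Finset.Icc 1 n \ C).sort (· ≤ ·)).map fun x => τ (insert x C)

/-- An `r`-signotope on `[n]`, encoded as a sign function on all of `Finset ℕ`
which is `-` away from the `r`-subsets of `[n]`. -/
def IsSignotope (n r : ℕ) (σ : Finset ℕ → Bool) : Prop :=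
  (∀ A, σ A = true → A ⊆ Finset.Icc 1 n ∧ A.card = r) ∧
  ∀ X : Finset ℕ, X ⊆ Finset.Icc 1 n → X.card = r + 1 →
    signChanges ((X.sort (· ≤ ·)).map fun x => σ (X.erase x)) ≤ 1

/-- A `d`-co-signotope on `[n]`: every `(τ,B,i)`-series has at most one sign change. -/
def IsCoSignotope (n d : ℕ) (τ : Finset ℕ → Bool) : Prop :=
  (∀ A, τ A = true → A ⊆ Finset.Icc 1 n ∧ A.card = d) ∧
  ∀ B : Finset ℕ, B ⊆ Finset.Icc 1 n → B.card = d → ∀ b ∈ B,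
    signChanges (series n τ (B.erase b)) ≤ 1

/-- `𝒮_p(n,r)`: `r`-signotopes on `[n]` with exactly `p` `+`-signs. -/
noncomputable def sigSet (n r p : ℕ) : Set (Finset ℕ → Bool) :=
  {σ | IsSignotope n r σ ∧ plusCount σ = p}

/-- `𝒮_{≤p}(n,r)`. -/
noncomputable def sigSetLe (n r p : ℕ) : Set (Finset ℕ → Bool) :=
  {σ | IsSignotope n r σ ∧ plusCount σ ≤ p}

/-- `𝒮̄_p(n,d)`: `d`-co-signotopes on `[n]` with exactly `p` `+`-subsets. -/
noncomputable def coSigSet (n d p : ℕ) : Set (Finset ℕ → Bool) :=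
  {τ | IsCoSignotope n d τ ∧ plusCount τ = p}

/-- `𝒮̄_{≤p}(n,d)`. -/
noncomputable def coSigSetLe (n d p : ℕ) : Set (Finset ℕ → Bool) :=
  {τ | IsCoSignotope n d τ ∧ plusCount τ ≤ p}

/-- `σ` and `τ` differ by a single step: `σ⁻¹(+) ⊊ τ⁻¹(+)` and `|τ⁻¹(+)| = |σ⁻¹(+)| + 1`. -/
noncomputable def SingleStep (σ τ : Finset ℕ → Bool) : Prop :=
  {A | σ A = true} ⊂ {A | τ A = true} ∧ plusCount τ = plusCount σ + 1

/-- The higher Bruhat order on `r`-signotopes on `[n]`: reflexive-transitive closure of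
the single step relation. -/
noncomputable def BruhatLe (n r : ℕ) (σ τ : Finset ℕ → Bool) : Prop :=
  Relation.ReflTransGen (fun a b => IsSignotope n r a ∧ IsSignotope n r b ∧ SingleStep a b) σ τ

/-- The complementary higher Bruhat order on `d`-co-signotopes on `[n]`. -/
noncomputable def CoBruhatLe (n d : ℕ) (σ τ : Finset ℕ → Bool) : Prop :=
  Relation.ReflTransGen (fun a b => IsCoSignotope n d a ∧ IsCoSignotope n d b ∧ SingleStep a b) σ τ

/-- Adjacency in the graph `G_{n,d}`: `B' = (B \ {x}) ∪ {y}` with no element of `B \ {x}`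
strictly between `x` and `y`. -/
def GAdj (n d : ℕ) (B B' : Finset ℕ) : Prop :=
  B ⊆ Finset.Icc 1 n ∧ B.card = d ∧ B' ⊆ Finset.Icc 1 n ∧ B'.card = d ∧
  ∃ x ∈ B, ∃ y ∈ Finset.Icc 1 n, y ∉ B ∧ B' = insert y (B.erase x) ∧
    ∀ z ∈ B.erase x, ¬(min x y < z ∧ z < max x y)

/-- The source subset `S_{n,d,i} = {1,…,i} ∪ {n-d+i+1,…,n}`. -/
def sourceSubset (n d i : ℕ) : Finset ℕ :=
  Finset.Icc 1 i ∪ Finset.Icc (n - d + i + 1) n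

/-- Connectivity inside the `+`-subsets of `τ` (the induced subgraph `G_{n,d}[τ]`). -/
def plusConn (n d : ℕ) (τ : Finset ℕ → Bool) : Finset ℕ → Finset ℕ → Prop :=
  Relation.ReflTransGen fun A A' => τ A = true ∧ τ A' = true ∧ GAdj n d A A'

/-- The vertex set `𝒞^τ_i` of the `+`-component of `τ` containing `S_{n,d,i}`
(empty if `S_{n,d,i}` is not a `+`-subset). -/
def comp (n d : ℕ) (τ : Finset ℕ → Bool) (i : ℕ) : Set (Finset ℕ) :=
  {B | τ (sourceSubset n d i) = true ∧ τ B = true ∧ plusConn n d τ (sourceSubset n d i) B}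

/-- The `j`-th smallest element (1-based) of a finite set of naturals. -/
def nthElt (B : Finset ℕ) (j : ℕ) : ℕ := (B.sort (· ≤ ·)).getD (j - 1) 0

/-- `b_j` with the conventions `b_0 = 0` and `b_{d+1} = n+1` (as an integer). -/
def extNth (n d : ℕ) (B : Finset ℕ) (j : ℕ) : ℤ :=
  if j = 0 then 0 else if j ≤ d then (nthElt B j : ℤ) else (n : ℤ) + 1

/-- A series is left-aligned if it starts with `+` and ends with `-`. -/
def LeftAligned (l : List Bool) : Prop :=
  l.head? = some true ∧ l.getLast? = some false

/-- A series is right-aligned if it starts with `-` and ends with `+`. -/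
def RightAligned (l : List Bool) : Prop :=
  l.head? = some false ∧ l.getLast? = some true

/-- `𝒮̄_{p,i}(n,d)`: co-signotopes in `𝒮̄_p(n,d)` whose only nonempty `+`-component
is `𝒞^τ_i` (i.e. every `+`-subset lies in `𝒞^τ_i`). -/
noncomputable def coSigOnly (n d p i : ℕ) : Set (Finset ℕ → Bool) :=
  {τ | IsCoSignotope n d τ ∧ plusCount τ = p ∧ ∀ B, τ B = true → B ∈ comp n d τ i}

/-- `Z(d,i)`: points `(a_1,…,a_d) ∈ ℤ_{>0}^d` (0-indexed in Lean) with `a_j ≥ a_{j-1}`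
for `j ∈ [2,i]` and `a_j ≥ a_{j+1}` for `j ∈ [i+1,d-1]` (1-based indices). -/
def ZSet (d i : ℕ) : Set (Fin d → ℤ) :=
  {a | (∀ j, 0 < a j) ∧
    (∀ j k : Fin d, (j : ℕ) + 1 = (k : ℕ) → (k : ℕ) + 1 ≤ i → a j ≤ a k) ∧
    (∀ j k : Fin d, (j : ℕ) + 1 = (k : ℕ) → i ≤ (j : ℕ) → a k ≤ a j)}

/-- A `(d,i)`-Ferrers diagram with respect to `p`. -/
def IsFerrers (d i p : ℕ) (F : Set (Fin d → ℤ)) : Prop :=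
  F ⊆ ZSet d i ∧ F.ncard = p ∧
  ∀ a ∈ F, ∀ a' ∈ ZSet d i, (∀ j, a' j ≤ a j) → a' ∈ F

/-- The number of `(d,i)`-Ferrers diagrams with respect to `p`. -/
noncomputable def ferrersCount (d i p : ℕ) : ℕ :=
  {F : Set (Fin d → ℤ) | IsFerrers d i p F}.ncard

/-- `f_{n,d,i,j}` (here `j` is the 1-based coordinate index). -/
def fFun (n d i j : ℕ) (x : ℕ) : ℤ :=
  if j ≤ i then (x : ℤ) - j + 1 else ((n : ℤ) - x) - ((d : ℤ) - j) + 1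

/-- `g_{n,d,i}` maps a `d`-subset `B = (b_1 < … < b_d)` to
`(f_{n,d,i,1}(b_1), …, f_{n,d,i,d}(b_d))`. -/
def gMap (n d i : ℕ) (B : Finset ℕ) : Fin d → ℤ :=
  fun k => fFun n d i ((k : ℕ) + 1) (nthElt B ((k : ℕ) + 1))

/-- A sparse composition of `p` of length `d+1`. -/
def IsSparseComposition (d p : ℕ) (c : Fin (d + 1) → ℕ) : Prop :=
  (∑ i, c i) = p ∧
  ∀ i : Fin (d + 1), 1 ≤ (i : ℕ) →
    c i = 0 ∨ c ⟨(i : ℕ) - 1, lt_of_le_of_lt (Nat.sub_le _ _) i.isLt⟩ = 0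

/-- The component `τ_i` of the `+`-component decomposition `Δ(τ)`:
the sign function whose `+`-set is `𝒞^τ_i`. -/
noncomputable def compFun (n d : ℕ) (τ : Finset ℕ → Bool) (i : ℕ) : Finset ℕ → Bool :=
  ofPlusSet (comp n d τ i)

/-- Keep the `i` smallest elements of `B` and shift the others by `ñ - n`
(this is `g⁻¹_{ñ,d,i} ∘ g_{n,d,i}` on `d`-subsets). -/
def gammaSet (n tn i : ℕ) (B : Finset ℕ) : Finset ℕ :=
  ((B.sort (· ≤ ·)).mapIdx fun k x => if k < i then x else x + tn - n).toFinset

/-- The map `h_{n,ñ,d,p,i}` on sign functions. -/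
noncomputable def hFun (n tn i : ℕ) (τ : Finset ℕ → Bool) : Finset ℕ → Bool :=
  ofPlusSet {A | ∃ B, τ B = true ∧ A = gammaSet n tn i B}

open Classical in
/-- `γ_{τ,ñ}(B)`: replace `b_j` by `b_j + ñ - n` whenever the `(τ,B,j)`-series is
right-aligned. -/
noncomputable def gammaFun (n tn : ℕ) (τ : Finset ℕ → Bool) (B : Finset ℕ) : Finset ℕ :=
  B.image fun x => if RightAligned (series n τ (B.erase x)) then x + tn - n else x

/-- The simple bijection `φ_{n,ñ,d,p}` on sign functions. -/
noncomputable def phiFun (n tn : ℕ) (τ : Finset ℕ → Bool) : Finset ℕ → Bool :=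
  ofPlusSet {A | ∃ B, τ B = true ∧ A = gammaFun n tn τ B}

/-!
Let `τ` have at most `p` `+`-subsets, where `p + d ≤ m`. The line `{C ∪ {w} : w ∈ [m] \ C}`
through a `+`-subset has `m - d + 1 > p` elements, so it contains a `-`; having at most one sign
change, its `+`-subsets form an initial or a final run. Accordingly each element `x` of a
`+`-subset `B` is left or right (`IsRight`), by the line of `B \ {x}`. A left run and a right run
with different cores share at most one set, so together they have at most `p + 1` sets. This count
shows that in every `+`-subset the left elements precede the right ones, with a gap of more than
`m - p - d`, and that exchanging one element of a `+`-subset does not change the type of the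
others. Hence `γ`, which moves the right elements by `ñ - n`, is injective on each `B`, carries the
runs of the lines of `τ` onto runs of the same type of the lines of `φ(τ)`, and is undone by the
`γ` of `φ(τ)`: so `φ(τ)` is a co-signotope with as many `+`-subsets, and `φ_{ñ,n} ∘ φ_{n,ñ} = id`.
The type of `x` in `B` is read off the end of its line that is `+`, so it does not change along a
single step, and `φ` maps single steps to single steps.
-/

open Finset
open scoped List

theorem signChanges_cons_cons (a b : Bool) (l : List Bool) :
    signChanges (a :: b :: l) = (if a = b then 0 else 1) + signChanges (b :: l) := by
  by_cases h : a = b <;> simp [signChanges, List.zip, h]; omega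

theorem signChanges_eq_zero_of_forall_eq {l : List Bool} {c : Bool} (h : ∀ x ∈ l, x = c) :
    signChanges l = 0 := by
  simp only [signChanges, List.length_eq_zero_iff, List.filter_eq_nil_iff]
  intro q hq
  have hmem := List.of_mem_zip hq
  simp [h _ hmem.1, h _ (List.mem_of_mem_tail hmem.2)]

theorem signChanges_le_cons (a : Bool) (l : List Bool) :
    signChanges l ≤ signChanges (a :: l) := by
  cases l with
  | nil => simp [signChanges]
  | cons b t => rw [signChanges_cons_cons]; omega

theorem signChanges_cons_le_cons_cons (a b : Bool) (l : List Bool) :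
    signChanges (a :: l) ≤ signChanges (a :: b :: l) := by
  rcases l with _ | ⟨c, t⟩
  · simp [signChanges]
  · rw [signChanges_cons_cons, signChanges_cons_cons a b, signChanges_cons_cons b c]
    cases a <;> cases b <;> cases c <;> simp <;> omega

theorem signChanges_cons_le_of_sublist {l₁ l₂ : List Bool} (h : l₁ <+ l₂) (a : Bool) :
    signChanges (a :: l₁) ≤ signChanges (a :: l₂) := by
  induction h generalizing a with
  | slnil => rfl
  | cons b _ ih => exact (ih a).trans (signChanges_cons_le_cons_cons a b _)
  | cons_cons b _ ih =>
    rw [signChanges_cons_cons, signChanges_cons_cons]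
    exact Nat.add_le_add_left (ih b) _

theorem signChanges_le_of_sublist {l₁ l₂ : List Bool} (h : l₁ <+ l₂) :
    signChanges l₁ ≤ signChanges l₂ := by
  induction h with
  | slnil => rfl
  | cons b _ ih => exact ih.trans (signChanges_le_cons b _)
  | cons_cons b h _ => exact signChanges_cons_le_of_sublist h b

theorem signChanges_le_one_iff {l : List Bool} :
    signChanges l ≤ 1 ↔ ∀ a, ¬ [a, !a, a] <+ l := by
  constructor
  · intro h a hsub
    have := (signChanges_le_of_sublist hsub).trans h
    rw [signChanges_cons_cons, signChanges_cons_cons] at this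
    cases a <;> simp at this
  · intro h
    induction l with
    | nil => simp [signChanges]
    | cons a t ih =>
      rcases t with _ | ⟨b, t⟩
      · simp [signChanges]
      rw [signChanges_cons_cons]
      by_cases hab : a = b
      · subst hab
        simpa using ih fun c hc => h c (hc.cons a)
      · have hconst : ∀ x ∈ b :: t, x = b := by
          intro x hx
          by_contra hxb
          have hxt : x ∈ t := (List.mem_cons.mp hx).resolve_left hxb
          have hba : b = !a := Bool.eq_not_of_ne (Ne.symm hab)
          have hxa : x = a := by rw [Bool.eq_not_of_ne hxb, hba, Bool.not_not]
          refine h a ?_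
          rw [← hba]
          exact ((List.singleton_sublist.mpr (hxa ▸ hxt)).cons_cons b).cons_cons a
        rw [signChanges_eq_zero_of_forall_eq hconst, if_neg hab]

def line (m : ℕ) (C : Finset ℕ) : Finset ℕ := Icc 1 m \ C

@[simp]
theorem mem_line {m w : ℕ} {C : Finset ℕ} : w ∈ line m C ↔ 1 ≤ w ∧ w ≤ m ∧ w ∉ C := by
  simp only [line, mem_sdiff, mem_Icc, and_assoc]

theorem series_eq (m : ℕ) (τ : Finset ℕ → Bool) (C : Finset ℕ) :
    series m τ C = ((line m C).sort (· ≤ ·)).map fun x => τ (insert x C) := rfl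

theorem signChanges_series_le_one_iff {m : ℕ} {τ : Finset ℕ → Bool} {C : Finset ℕ} :
    signChanges (series m τ C) ≤ 1 ↔
      ∀ x ∈ line m C, ∀ y ∈ line m C, ∀ z ∈ line m C, x < y → y < z →
        τ (insert x C) = τ (insert z C) → τ (insert y C) = τ (insert x C) := by
  rw [signChanges_le_one_iff, series_eq]
  constructor
  · intro h x hx y hy z hz hxy hyz hxz
    by_contra hne
    have hsub : [x, y, z] <+ (line m C).sort (· ≤ ·) :=
      List.sublist_of_subperm_of_pairwise
        (List.subperm_of_subset (by simp; omega) (by simp [hx, hy, hz]))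
        (by simp; omega) (pairwise_sort _ _)
    have := hsub.map fun w => τ (insert w C)
    rw [List.map_cons, List.map_cons, List.map_cons, List.map_nil, Bool.eq_not_of_ne hne,
      ← hxz] at this
    exact h _ this
  · rintro h a hsub
    obtain ⟨l', hl', heq⟩ := List.sublist_map_iff.mp hsub
    rcases l' with _ | ⟨x, _ | ⟨y, _ | ⟨z, _ | _⟩⟩⟩ <;> simp only [List.map_cons,
      List.map_nil, List.cons.injEq, reduceCtorEq, and_false, and_true] at heq
    obtain ⟨hxa, hya, hza⟩ := heq
    have hlt := (Finset.sortedLT_sort (line m C)).pairwise.sublist hl'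
    simp only [List.pairwise_cons, List.mem_cons, List.not_mem_nil] at hlt
    have hmem := hl'.subset
    simp only [List.cons_subset, Finset.mem_sort] at hmem
    have := h x hmem.1 y hmem.2.1 z hmem.2.2.1 (hlt.1 y (by simp)) (hlt.2.1 z (by simp))
      (hxa.symm.trans hza)
    rw [← hxa, ← hya] at this
    cases a <;> simp at this

theorem series_head? {m : ℕ} {τ : Finset ℕ → Bool} {C : Finset ℕ} (h : (line m C).Nonempty) :
    (series m τ C).head? = some (τ (insert ((line m C).min' h) C)) := by
  rw [series_eq, List.head?_map, List.head?_eq_getElem?, List.getElem?_eq_getElem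
    (by rw [length_sort]; exact card_pos.mpr h), ← min'_eq_sorted_zero]
  rfl

theorem series_getLast? {m : ℕ} {τ : Finset ℕ → Bool} {C : Finset ℕ} (h : (line m C).Nonempty) :
    (series m τ C).getLast? = some (τ (insert ((line m C).max' h) C)) := by
  rw [series_eq, List.getLast?_map, List.getLast?_eq_getElem?, List.getElem?_eq_getElem
    (by rw [length_sort]; exact Nat.sub_lt (card_pos.mpr h) one_pos), ← max'_eq_sorted_last]
  rfl

theorem rightAligned_series_iff {m : ℕ} {τ : Finset ℕ → Bool} {C : Finset ℕ}
    (h : (line m C).Nonempty) :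
    RightAligned (series m τ C) ↔
      τ (insert ((line m C).min' h) C) = false ∧ τ (insert ((line m C).max' h) C) = true := by
  simp [RightAligned, series_head? h, series_getLast? h]

section Finset

variable {α : Type*} [DecidableEq α]

theorem insert_eq_union_of_insert_eq {C C' : Finset α} {w w' : α} (hcard : C.card = C'.card)
    (hne : C ≠ C') (hw : w ∉ C) (h : insert w C = insert w' C') : insert w C = C ∪ C' := by
  have hsub : C ∪ C' ⊆ insert w C :=
    union_subset (subset_insert w C) (h ▸ subset_insert w' C')
  have hlt : C.card < (C ∪ C').card := by
    refine card_lt_card ⟨subset_union_left, fun hsub' => hne ?_⟩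
    exact (eq_of_subset_of_card_le (union_subset_iff.mp hsub').2 hcard.le).symm
  exact (eq_of_subset_of_card_le hsub (by rw [card_insert_of_notMem hw]; omega)).symm

theorem card_image_insert_sdiff (S C : Finset α) :
    ((S \ C).image (insert · C)).card = (S \ C).card :=
  card_image_of_injOn fun _ hw _ _ h => (insert_inj (mem_sdiff.mp hw).2).mp h

theorem card_sdiff_erase_add_card_inter {S B : Finset α} {x : α} (hxS : x ∈ S) (hxB : x ∈ B) :
    (S \ B.erase x).card + (S ∩ B).card = S.card + 1 := by
  have : S \ B.erase x = insert x (S \ B) := by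
    ext a; by_cases hax : a = x <;> simp [hax, hxS]
  rw [this, card_insert_of_notMem (by simp [hxB]), add_right_comm, card_sdiff_add_card_inter]

end Finset

theorem IsCoSignotope.subset_Icc {m d : ℕ} {τ : Finset ℕ → Bool} (hτ : IsCoSignotope m d τ)
    {B : Finset ℕ} (hB : τ B = true) : B ⊆ Icc 1 m :=
  (hτ.1 B hB).1

theorem IsCoSignotope.card_eq {m d : ℕ} {τ : Finset ℕ → Bool} (hτ : IsCoSignotope m d τ)
    {B : Finset ℕ} (hB : τ B = true) : B.card = d :=
  (hτ.1 B hB).2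

theorem IsCoSignotope.finite_setOf {m d : ℕ} {τ : Finset ℕ → Bool} (hτ : IsCoSignotope m d τ) :
    {A | τ A = true}.Finite :=
  (finite_toSet (Icc 1 m).powerset).subset fun _ hA => mem_powerset.mpr (hτ.subset_Icc hA)

section Counting

variable {τ : Finset ℕ → Bool}

theorem card_le_plusCount (hfin : {A | τ A = true}.Finite) {F : Finset (Finset ℕ)}
    (hF : ∀ A ∈ F, τ A = true) : F.card ≤ plusCount τ := by
  rw [plusCount, ← Set.ncard_coe_finset]
  exact Set.ncard_le_ncard (fun A hA => hF A hA) hfin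

theorem card_sdiff_le_plusCount (hfin : {A | τ A = true}.Finite) {S C : Finset ℕ}
    (h : ∀ w ∈ S \ C, τ (insert w C) = true) : (S \ C).card ≤ plusCount τ := by
  rw [← card_image_insert_sdiff]
  exact card_le_plusCount hfin (by simp only [mem_image]; grind)

/-- Two lines with distinct cores can only share the set `C ∪ C'`. -/
theorem card_sdiff_add_card_sdiff_le (hfin : {A | τ A = true}.Finite) {S S' C C' : Finset ℕ}
    (hcard : C.card = C'.card) (hne : C ≠ C') (h : ∀ w ∈ S \ C, τ (insert w C) = true)
    (h' : ∀ w ∈ S' \ C', τ (insert w C') = true) :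
    (S \ C).card + (S' \ C').card ≤ plusCount τ + 1 := by
  set F := (S \ C).image (insert · C)
  set G := (S' \ C').image (insert · C')
  have hinter : (F ∩ G).card ≤ 1 := by
    refine card_le_one.mpr fun X hX Y hY => ?_
    simp only [F, G, mem_inter, mem_image, mem_sdiff] at hX hY
    obtain ⟨⟨w, ⟨-, hw⟩, rfl⟩, w', -, hX⟩ := hX
    obtain ⟨⟨v, ⟨-, hv⟩, rfl⟩, v', -, hY⟩ := hY
    rw [insert_eq_union_of_insert_eq hcard hne hw hX.symm,
      insert_eq_union_of_insert_eq hcard hne hv hY.symm]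
  have hunion : (F ∪ G).card ≤ plusCount τ :=
    card_le_plusCount hfin (by simp only [F, G, mem_union, mem_image]; grind)
  have := card_union_add_card_inter F G
  rw [card_image_insert_sdiff, card_image_insert_sdiff] at this
  omega

theorem exists_insert_eq_insert_of_plusCount_lt (hfin : {A | τ A = true}.Finite)
    {S S' C C' : Finset ℕ} (h : ∀ w ∈ S \ C, τ (insert w C) = true)
    (h' : ∀ w ∈ S' \ C', τ (insert w C') = true)
    (hlt : plusCount τ < (S \ C).card + (S' \ C').card) :
    ∃ w ∈ S \ C, ∃ w' ∈ S' \ C', insert w C = insert w' C' := by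
  by_contra! hdisj
  have hunion := card_union_of_disjoint (s := (S \ C).image (insert · C))
    (t := (S' \ C').image (insert · C')) (by
      simp only [disjoint_left, mem_image]
      rintro _ ⟨w, hw, rfl⟩ ⟨w', hw', hww'⟩
      exact hdisj w hw w' hw' hww'.symm)
  rw [card_image_insert_sdiff, card_image_insert_sdiff] at hunion
  have := card_le_plusCount hfin
    (F := (S \ C).image (insert · C) ∪ (S' \ C').image (insert · C'))
    (by simp only [mem_union, mem_image]; grind)
  omega

end Counting

structure SparseCoSignotope (m d p : ℕ) (τ : Finset ℕ → Bool) : Prop where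
  isCoSignotope : IsCoSignotope m d τ
  plusCount_le : plusCount τ ≤ p
  add_le : p + d ≤ m

def IsRight (m : ℕ) (τ : Finset ℕ → Bool) (B : Finset ℕ) (x : ℕ) : Prop :=
  RightAligned (series m τ (B.erase x))

section Lines

variable {m d p : ℕ} {τ : Finset ℕ → Bool} {B : Finset ℕ} {x : ℕ}

theorem IsCoSignotope.mem_line_erase (hτ : IsCoSignotope m d τ) (hB : τ B = true) (hx : x ∈ B) :
    x ∈ line m (B.erase x) := by
  have := mem_Icc.mp (hτ.subset_Icc hB hx)
  simp [this.1, this.2]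

theorem IsCoSignotope.sign_eq_of_le_of_le (hτ : IsCoSignotope m d τ) (hB : τ B = true)
    (hx : x ∈ B) {a b c : ℕ} (ha : a ∈ line m (B.erase x)) (hb : b ∈ line m (B.erase x))
    (hc : c ∈ line m (B.erase x)) (hab : a ≤ b) (hbc : b ≤ c)
    (hac : τ (insert a (B.erase x)) = τ (insert c (B.erase x))) :
    τ (insert b (B.erase x)) = τ (insert a (B.erase x)) := by
  rcases hab.eq_or_lt with rfl | hab
  · rfl
  rcases hbc.eq_or_lt with rfl | hbc
  · exact hac.symm
  exact signChanges_series_le_one_iff.mp (hτ.2 B (hτ.subset_Icc hB) (hτ.card_eq hB) x hx)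
    a ha b hb c hc hab hbc hac

theorem IsRight.insert_eq_true (hR : IsRight m τ B x) (hτ : IsCoSignotope m d τ)
    (hB : τ B = true) (hx : x ∈ B) {w : ℕ} (hw : w ∈ line m (B.erase x)) (hxw : x ≤ w) :
    τ (insert w (B.erase x)) = true := by
  have hne : (line m (B.erase x)).Nonempty := ⟨x, hτ.mem_line_erase hB hx⟩
  have hmax := ((rightAligned_series_iff hne).mp hR).2
  have hxB : τ (insert x (B.erase x)) = true := by rwa [insert_erase hx]
  rw [hτ.sign_eq_of_le_of_le hB hx (hτ.mem_line_erase hB hx) hw (max'_mem _ hne) hxw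
    (le_max' _ w hw) (hxB.trans hmax.symm), hxB]

theorem SparseCoSignotope.exists_insert_eq_false (hτ : SparseCoSignotope m d p τ)
    (hB : τ B = true) (hx : x ∈ B) :
    ∃ w ∈ line m (B.erase x), τ (insert w (B.erase x)) = false := by
  by_contra! hall
  have hle := card_sdiff_le_plusCount hτ.isCoSignotope.finite_setOf (S := Icc 1 m)
    (C := B.erase x) fun w hw => by simpa using hall w hw
  rw [card_sdiff_of_subset ((erase_subset x B).trans (hτ.isCoSignotope.subset_Icc hB)),
    card_erase_of_mem hx, hτ.isCoSignotope.card_eq hB, Nat.card_Icc] at hle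
  have := hτ.plusCount_le
  have := hτ.add_le
  have := card_pos.mpr ⟨x, hx⟩
  rw [hτ.isCoSignotope.card_eq hB] at this
  omega

theorem SparseCoSignotope.ends_of_not_isRight (hτ : SparseCoSignotope m d p τ) (hB : τ B = true)
    (hx : x ∈ B) (hL : ¬ IsRight m τ B x) (hne : (line m (B.erase x)).Nonempty) :
    τ (insert ((line m (B.erase x)).min' hne) (B.erase x)) = true ∧
      τ (insert ((line m (B.erase x)).max' hne) (B.erase x)) = false := by
  set L := line m (B.erase x)
  have hxL := hτ.isCoSignotope.mem_line_erase hB hx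
  have hxB : τ (insert x (B.erase x)) = true := by rwa [insert_erase hx]
  obtain ⟨w, hw, hwf⟩ := hτ.exists_insert_eq_false hB hx
  have hmax : τ (insert (L.max' hne) (B.erase x)) = false := by
    by_contra hmax
    rw [Bool.not_eq_false] at hmax
    cases hmin : τ (insert (L.min' hne) (B.erase x))
    · exact hL ((rightAligned_series_iff hne).mpr ⟨hmin, hmax⟩)
    · have := hτ.isCoSignotope.sign_eq_of_le_of_le hB hx (min'_mem _ hne) hw (max'_mem _ hne)
        (min'_le _ w hw) (le_max' _ w hw) (hmin.trans hmax.symm)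
      rw [hwf, hmin] at this
      exact Bool.false_ne_true this
  refine ⟨?_, hmax⟩
  by_contra hmin
  rw [Bool.not_eq_true] at hmin
  have := hτ.isCoSignotope.sign_eq_of_le_of_le hB hx (min'_mem _ hne) hxL (max'_mem _ hne)
    (min'_le _ x hxL) (le_max' _ x hxL) (hmin.trans hmax.symm)
  rw [hxB, hmin] at this
  exact Bool.false_ne_true this.symm

theorem SparseCoSignotope.isRight_iff (hτ : SparseCoSignotope m d p τ) (hB : τ B = true)
    (hx : x ∈ B) (hne : (line m (B.erase x)).Nonempty) :
    IsRight m τ B x ↔ τ (insert ((line m (B.erase x)).max' hne) (B.erase x)) = true :=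
  ⟨fun hR => ((rightAligned_series_iff hne).mp hR).2, fun hmax => by
    by_contra hL
    rw [(hτ.ends_of_not_isRight hB hx hL hne).2] at hmax
    exact Bool.false_ne_true hmax⟩

theorem SparseCoSignotope.not_isRight_iff (hτ : SparseCoSignotope m d p τ) (hB : τ B = true)
    (hx : x ∈ B) (hne : (line m (B.erase x)).Nonempty) :
    ¬ IsRight m τ B x ↔ τ (insert ((line m (B.erase x)).min' hne) (B.erase x)) = true :=
  ⟨fun hL => (hτ.ends_of_not_isRight hB hx hL hne).1, fun hmin hR => by
    rw [((rightAligned_series_iff hne).mp hR).1] at hmin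
    exact Bool.false_ne_true hmin⟩

theorem SparseCoSignotope.insert_eq_true_of_not_isRight (hτ : SparseCoSignotope m d p τ)
    (hB : τ B = true) (hx : x ∈ B) (hL : ¬ IsRight m τ B x) {w : ℕ}
    (hw : w ∈ line m (B.erase x)) (hwx : w ≤ x) : τ (insert w (B.erase x)) = true := by
  have hne : (line m (B.erase x)).Nonempty := ⟨w, hw⟩
  have hmin := (hτ.not_isRight_iff hB hx hne).mp hL
  rw [hτ.isCoSignotope.sign_eq_of_le_of_le hB hx (min'_mem _ hne) hw
    (hτ.isCoSignotope.mem_line_erase hB hx) (min'_le _ w hw) hwx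
    (by rw [hmin, insert_erase hx, hB]), hmin]

end Lines

theorem card_Icc_inter_add_card_Icc_inter {A : Finset ℕ} {m z : ℕ} (hA : A ⊆ Icc 1 m)
    (hz : z ∈ A) : (Icc 1 z ∩ A).card + (Icc z m ∩ A).card = A.card + 1 := by
  have hb : ∀ a ∈ A, 1 ≤ a ∧ a ≤ m := fun a ha => mem_Icc.mp (hA ha)
  have hunion : Icc 1 z ∩ A ∪ Icc z m ∩ A = A := by
    ext a; have := hb a; simp only [mem_union, mem_inter, mem_Icc]; grind
  have hinter : Icc 1 z ∩ A ∩ (Icc z m ∩ A) = {z} := by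
    ext a; have := hb z hz; simp only [mem_inter, mem_Icc, mem_singleton]; grind
  rw [← card_union_add_card_inter, hunion, hinter, card_singleton]

theorem card_Icc_inter_insert {C : Finset ℕ} {a c : ℕ} (ha : a ∉ C) (ha1 : 1 ≤ a) :
    (Icc 1 c ∩ insert a C).card = (Icc 1 c ∩ C).card + if a ≤ c then 1 else 0 := by
  split_ifs with hac
  · rw [inter_insert_of_mem (mem_Icc.mpr ⟨ha1, hac⟩),
      card_insert_of_notMem fun h => ha (mem_inter.mp h).2]
  · rw [inter_insert_of_notMem (by simp [hac]), add_zero]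

theorem card_Icc_inter_add_card_Icc_inter_le {m u v z : ℕ} {B B' : Finset ℕ}
    (hB : B ⊆ Icc 1 m) (hu : u ∈ B) (hv : v ∈ B') (hcore : B.erase u = B'.erase v) (hz : z ∈ B)
    (hzu : z ≠ u) :
    (Icc z m ∩ B).card + (Icc 1 z ∩ B').card ≤ B.card + 1 + if z < u then 1 else 0 := by
  have hv' : (Icc 1 z ∩ B').card ≤ (Icc 1 z ∩ B.erase u).card + 1 := by
    rw [← insert_erase hv, ← hcore]
    calc _ ≤ (insert v (Icc 1 z ∩ B.erase u)).card :=
          card_le_card fun a => by simp only [mem_inter, mem_insert]; tauto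
      _ ≤ _ := card_insert_le _ _
  have hsplit := card_Icc_inter_add_card_Icc_inter hB hz
  have hsplitu := card_Icc_inter_add_card_Icc_inter ((erase_subset u B).trans hB)
    (mem_erase.mpr ⟨hzu, hz⟩)
  have hpos := card_pos.mpr ⟨u, hu⟩
  have hcardu := card_erase_of_mem hu
  split_ifs with hzu'
  · have := card_le_card (inter_subset_inter_left (s := Icc 1 z) (erase_subset u B))
    omega
  · rw [show Icc z m ∩ B = Icc z m ∩ B.erase u by ext a; simp; omega]
    omega

section Positions

variable {m d p : ℕ} {τ : Finset ℕ → Bool} {B B' : Finset ℕ} {x y : ℕ}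

theorem IsRight.forall_Icc_sdiff (hR : IsRight m τ B y) (hτ : IsCoSignotope m d τ)
    (hB : τ B = true) (hy : y ∈ B) :
    ∀ w ∈ Icc y m \ B.erase y, τ (insert w (B.erase y)) = true := by
  intro w hw
  have := mem_Icc.mp (hτ.subset_Icc hB hy)
  simp only [mem_sdiff, mem_Icc] at hw
  exact hR.insert_eq_true hτ hB hy (mem_line.mpr ⟨by omega, hw.1.2, hw.2⟩) hw.1.1

theorem SparseCoSignotope.forall_Icc_sdiff_of_not_isRight (hτ : SparseCoSignotope m d p τ)
    (hB : τ B = true) (hx : x ∈ B) (hL : ¬ IsRight m τ B x) :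
    ∀ w ∈ Icc 1 x \ B.erase x, τ (insert w (B.erase x)) = true := by
  intro w hw
  have := mem_Icc.mp (hτ.isCoSignotope.subset_Icc hB hx)
  simp only [mem_sdiff, mem_Icc] at hw
  exact hτ.insert_eq_true_of_not_isRight hB hx hL (mem_line.mpr ⟨hw.1.1, by omega, hw.2⟩) hw.1.2

theorem IsCoSignotope.card_Icc_sdiff_left (hτ : IsCoSignotope m d τ) (hB : τ B = true)
    (hx : x ∈ B) : (Icc 1 x \ B.erase x).card + (Icc 1 x ∩ B).card = x + 1 := by
  have := mem_Icc.mp (hτ.subset_Icc hB hx)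
  rw [card_sdiff_erase_add_card_inter (by simp; omega) hx, Nat.card_Icc, Nat.add_sub_cancel]

theorem IsCoSignotope.card_Icc_sdiff_right (hτ : IsCoSignotope m d τ) (hB : τ B = true)
    (hy : y ∈ B) : (Icc y m \ B.erase y).card + (Icc y m ∩ B).card = m + 2 - y := by
  have := mem_Icc.mp (hτ.subset_Icc hB hy)
  rw [card_sdiff_erase_add_card_inter (by simp; omega) hy, Nat.card_Icc]
  omega

theorem SparseCoSignotope.add_one_le_of_not_isRight (hτ : SparseCoSignotope m d p τ)
    (hB : τ B = true) (hx : x ∈ B) (hL : ¬ IsRight m τ B x) : x + 1 ≤ p + d := by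
  have hcount := card_sdiff_le_plusCount hτ.isCoSignotope.finite_setOf
    (hτ.forall_Icc_sdiff_of_not_isRight hB hx hL)
  have hcard := hτ.isCoSignotope.card_Icc_sdiff_left hB hx
  have : (Icc 1 x ∩ B).card ≤ d := hτ.isCoSignotope.card_eq hB ▸ card_le_card inter_subset_right
  have := hτ.plusCount_le
  omega

theorem SparseCoSignotope.add_two_le_of_isRight (hτ : SparseCoSignotope m d p τ)
    (hB : τ B = true) (hy : y ∈ B) (hR : IsRight m τ B y) : m + 2 ≤ p + d + y := by
  have hcount := card_sdiff_le_plusCount hτ.isCoSignotope.finite_setOf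
    (hR.forall_Icc_sdiff hτ.isCoSignotope hB hy)
  have hcard := hτ.isCoSignotope.card_Icc_sdiff_right hB hy
  have : (Icc y m ∩ B).card ≤ d := hτ.isCoSignotope.card_eq hB ▸ card_le_card inter_subset_right
  have := hτ.plusCount_le
  omega

/-- The left `+`-run through `x` in `B` and the right `+`-run through `y` in `B'` together
contain at most `p + 1` sets. -/
theorem SparseCoSignotope.add_add_two_le_of_erase_ne (hτ : SparseCoSignotope m d p τ)
    (hB : τ B = true) (hB' : τ B' = true) (hx : x ∈ B) (hy : y ∈ B') (hL : ¬ IsRight m τ B x)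
    (hR : IsRight m τ B' y) (hne : B.erase x ≠ B'.erase y) :
    x + m + 2 ≤ p + (Icc 1 x ∩ B).card + (Icc y m ∩ B').card + y := by
  have hτ' := hτ.isCoSignotope
  have := card_sdiff_add_card_sdiff_le hτ'.finite_setOf
    (by rw [card_erase_of_mem hx, card_erase_of_mem hy, hτ'.card_eq hB, hτ'.card_eq hB']) hne
    (hτ.forall_Icc_sdiff_of_not_isRight hB hx hL) (hR.forall_Icc_sdiff hτ' hB' hy)
  have := hτ'.card_Icc_sdiff_left hB hx
  have := hτ'.card_Icc_sdiff_right hB' hy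
  have := hτ.plusCount_le
  have := mem_Icc.mp (hτ'.subset_Icc hB' hy)
  omega

theorem SparseCoSignotope.add_add_two_le (hτ : SparseCoSignotope m d p τ)
    (hB : τ B = true) (hx : x ∈ B) (hy : y ∈ B) (hL : ¬ IsRight m τ B x)
    (hR : IsRight m τ B y) : x + m + 2 ≤ p + d + y := by
  have hxy : x ≠ y := by rintro rfl; exact hL hR
  have hne : B.erase x ≠ B.erase y := fun h => by
    have := mem_erase.mpr ⟨hxy, hx⟩
    simp [← h] at this
  have hmain := hτ.add_add_two_le_of_erase_ne hB hB hx hy hL hR hne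
  have hsum := card_union_add_card_inter (Icc 1 x ∩ B) (Icc y m ∩ B)
  have hunion : (Icc 1 x ∩ B ∪ Icc y m ∩ B).card ≤ d :=
    hτ.isCoSignotope.card_eq hB ▸ card_le_card (union_subset inter_subset_right inter_subset_right)
  have hinter : (Icc 1 x ∩ B ∩ (Icc y m ∩ B)).card ≤ x + 1 - y :=
    (card_le_card fun a ha => by simp only [mem_inter, mem_Icc] at ha ⊢; omega).trans
      (Nat.card_Icc y x).le
  have := hτ.add_le
  omega

theorem SparseCoSignotope.lt_of_not_isRight_of_isRight (hτ : SparseCoSignotope m d p τ)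
    (hB : τ B = true) (hx : x ∈ B) (hy : y ∈ B) (hL : ¬ IsRight m τ B x)
    (hR : IsRight m τ B y) : x < y := by
  have := hτ.add_add_two_le hB hx hy hL hR
  have := hτ.add_le
  omega

/-- The right run of `z` in `B` and the left run of `z` in `B'` are too long to be disjoint,
and a common set of the two would force `u ≤ z`, which the count excludes. -/
theorem SparseCoSignotope.isRight_of_erase_eq (hτ : SparseCoSignotope m d p τ) {u v z : ℕ}
    (hB : τ B = true) (hB' : τ B' = true) (hu : u ∈ B) (hv : v ∈ B')
    (hcore : B.erase u = B'.erase v) (hz : z ∈ B) (hzu : z ≠ u) (hR : IsRight m τ B z) :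
    IsRight m τ B' z := by
  have hτ' := hτ.isCoSignotope
  by_contra hL
  have hBB' : B ≠ B' := by rintro rfl; exact hL hR
  have huB' : u ∉ B' := fun huB' => by
    rcases eq_or_ne u v with rfl | huv
    · exact hBB' (by rw [← insert_erase hu, hcore, insert_erase hv])
    · have := mem_erase.mpr ⟨huv, huB'⟩
      simp [← hcore] at this
  have hzB' : z ∈ B' := mem_of_mem_erase (hcore ▸ mem_erase.mpr ⟨hzu, hz⟩)
  have hne : B.erase z ≠ B'.erase z := fun h =>
    hBB' (by rw [← insert_erase hz, h, insert_erase hzB'])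
  have hbound := card_Icc_inter_add_card_Icc_inter_le (hτ'.subset_Icc hB) hu hv hcore hz hzu
  have hright := hR.forall_Icc_sdiff hτ' hB hz
  have hleft := hτ.forall_Icc_sdiff_of_not_isRight hB' hzB' hL
  have htwo := card_sdiff_add_card_sdiff_le hτ'.finite_setOf
    (by rw [card_erase_of_mem hz, card_erase_of_mem hzB', hτ'.card_eq hB, hτ'.card_eq hB'])
    hne hright hleft
  have := hτ'.card_Icc_sdiff_right hB hz
  have := hτ'.card_Icc_sdiff_left hB' hzB'
  have := hτ'.card_eq hB
  have := hτ.plusCount_le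
  have := hτ.add_le
  have hzu' : z < u := by by_contra h; rw [if_neg h] at hbound; omega
  rw [if_pos hzu'] at hbound
  obtain ⟨w, -, w', hw', hX⟩ :=
    exists_insert_eq_insert_of_plusCount_lt hτ'.finite_setOf hright hleft (by omega)
  have huX : u ∈ insert w' (B'.erase z) := hX ▸ mem_insert_of_mem (mem_erase.mpr ⟨hzu.symm, hu⟩)
  have : u = w' := by simpa [huB'] using huX
  simp only [mem_sdiff, mem_Icc] at hw'
  omega

theorem SparseCoSignotope.isRight_iff_of_erase_eq (hτ : SparseCoSignotope m d p τ) {u v z : ℕ}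
    (hB : τ B = true) (hB' : τ B' = true) (hu : u ∈ B) (hv : v ∈ B')
    (hcore : B.erase u = B'.erase v) (hz : z ∈ B) (hzu : z ≠ u) (hzv : z ≠ v) :
    IsRight m τ B z ↔ IsRight m τ B' z :=
  ⟨hτ.isRight_of_erase_eq hB hB' hu hv hcore hz hzu,
    hτ.isRight_of_erase_eq hB' hB hv hu hcore.symm
      (mem_of_mem_erase (hcore ▸ mem_erase.mpr ⟨hzu, hz⟩)) hzv⟩

end Positions

open Classical in
noncomputable def gammaShift (ms mt : ℕ) (τ : Finset ℕ → Bool) (B : Finset ℕ) (x : ℕ) : ℕ :=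
  if RightAligned (series ms τ (B.erase x)) then x + mt - ms else x

theorem gammaFun_eq_image (ms mt : ℕ) (τ : Finset ℕ → Bool) (B : Finset ℕ) :
    gammaFun ms mt τ B = B.image (gammaShift ms mt τ B) :=
  rfl

theorem phiFun_eq_true_iff {ms mt : ℕ} {τ : Finset ℕ → Bool} {A : Finset ℕ} :
    phiFun ms mt τ A = true ↔ ∃ B, τ B = true ∧ A = gammaFun ms mt τ B := by
  simp [phiFun, ofPlusSet]

section Gamma

variable {ms mt d p : ℕ} {τ σ : Finset ℕ → Bool} {B B' : Finset ℕ} {x : ℕ}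

theorem gammaShift_of_isRight (h : IsRight ms τ B x) : gammaShift ms mt τ B x = x + mt - ms :=
  if_pos h

theorem gammaShift_of_not_isRight (h : ¬ IsRight ms τ B x) : gammaShift ms mt τ B x = x :=
  if_neg h

theorem gammaShift_congr (h : IsRight ms τ B x ↔ IsRight ms σ B' x) :
    gammaShift ms mt τ B x = gammaShift ms mt σ B' x := by
  by_cases hR : IsRight ms τ B x
  · rw [gammaShift_of_isRight hR, gammaShift_of_isRight (h.mp hR)]
  · rw [gammaShift_of_not_isRight hR, gammaShift_of_not_isRight (h.not.mp hR)]

theorem isRight_insert_erase_iff {m u b : ℕ} (hu : u ∉ B.erase b) :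
    IsRight m τ (insert u (B.erase b)) u ↔ IsRight m τ B b := by
  rw [IsRight, IsRight, erase_insert hu]

theorem SparseCoSignotope.gammaShift_add (hτ : SparseCoSignotope ms d p τ) (ht : p + d ≤ mt)
    (hB : τ B = true) (hx : x ∈ B) (hR : IsRight ms τ B x) :
    gammaShift ms mt τ B x + ms = x + mt := by
  have := hτ.add_two_le_of_isRight hB hx hR
  rw [gammaShift_of_isRight hR]
  omega

theorem SparseCoSignotope.gammaShift_mem_Icc (hτ : SparseCoSignotope ms d p τ)
    (ht : p + d ≤ mt) (hB : τ B = true) (hx : x ∈ B) : gammaShift ms mt τ B x ∈ Icc 1 mt := by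
  have := mem_Icc.mp (hτ.isCoSignotope.subset_Icc hB hx)
  rw [mem_Icc]
  by_cases hR : IsRight ms τ B x
  · have := hτ.gammaShift_add ht hB hx hR
    have := hτ.add_two_le_of_isRight hB hx hR
    omega
  · have := hτ.add_one_le_of_not_isRight hB hx hR
    rw [gammaShift_of_not_isRight hR]
    omega

/-- The gap `add_add_two_le` between left and right elements absorbs the shift. -/
theorem SparseCoSignotope.strictMonoOn_gammaShift (hτ : SparseCoSignotope ms d p τ)
    (ht : p + d ≤ mt) (hB : τ B = true) : StrictMonoOn (gammaShift ms mt τ B) B := by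
  intro x hx y hy hxy
  by_cases hRx : IsRight ms τ B x <;> by_cases hRy : IsRight ms τ B y
  · have := hτ.gammaShift_add ht hB hx hRx
    have := hτ.gammaShift_add ht hB hy hRy
    omega
  · exact absurd (hτ.lt_of_not_isRight_of_isRight hB hy hx hRy hRx) (by omega)
  · have := hτ.add_add_two_le hB hx hy hRx hRy
    have := hτ.gammaShift_add ht hB hy hRy
    rw [gammaShift_of_not_isRight hRx]
    omega
  · rwa [gammaShift_of_not_isRight hRx, gammaShift_of_not_isRight hRy]

theorem SparseCoSignotope.card_gammaFun (hτ : SparseCoSignotope ms d p τ) (ht : p + d ≤ mt)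
    (hB : τ B = true) : (gammaFun ms mt τ B).card = d := by
  rw [gammaFun_eq_image, card_image_of_injOn (hτ.strictMonoOn_gammaShift ht hB).injOn,
    hτ.isCoSignotope.card_eq hB]

theorem SparseCoSignotope.gammaFun_subset_Icc (hτ : SparseCoSignotope ms d p τ)
    (ht : p + d ≤ mt) (hB : τ B = true) : gammaFun ms mt τ B ⊆ Icc 1 mt := by
  rw [gammaFun_eq_image]
  exact image_subset_iff.mpr fun x hx => hτ.gammaShift_mem_Icc ht hB hx

theorem SparseCoSignotope.erase_gammaFun (hτ : SparseCoSignotope ms d p τ) (ht : p + d ≤ mt)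
    (hB : τ B = true) (hx : x ∈ B) :
    (gammaFun ms mt τ B).erase (gammaShift ms mt τ B x) =
      (B.erase x).image (gammaShift ms mt τ B) := by
  have hinj := (hτ.strictMonoOn_gammaShift ht hB).injOn
  ext a
  simp only [gammaFun_eq_image, mem_erase, mem_image]
  constructor
  · rintro ⟨hne, y, hy, rfl⟩
    exact ⟨y, ⟨fun h => hne (h ▸ rfl), hy⟩, rfl⟩
  · rintro ⟨y, ⟨hyx, hy⟩, rfl⟩
    exact ⟨fun h => hyx (hinj hy hx h), y, hy, rfl⟩

theorem SparseCoSignotope.card_Icc_inter_gammaFun (hτ : SparseCoSignotope ms d p τ)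
    (ht : p + d ≤ mt) (hB : τ B = true) (hx : x ∈ B) :
    (Icc 1 (gammaShift ms mt τ B x) ∩ gammaFun ms mt τ B).card = (Icc 1 x ∩ B).card := by
  have hmono := hτ.strictMonoOn_gammaShift ht hB
  have : Icc 1 (gammaShift ms mt τ B x) ∩ gammaFun ms mt τ B =
      (Icc 1 x ∩ B).image (gammaShift ms mt τ B) := by
    ext a
    simp only [gammaFun_eq_image, mem_inter, mem_image, mem_Icc]
    constructor
    · rintro ⟨⟨-, hax⟩, y, hy, rfl⟩
      exact ⟨y, ⟨⟨(mem_Icc.mp (hτ.isCoSignotope.subset_Icc hB hy)).1,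
        (hmono.le_iff_le hy hx).mp hax⟩, hy⟩, rfl⟩
    · rintro ⟨y, ⟨⟨-, hyx⟩, hy⟩, rfl⟩
      exact ⟨⟨(mem_Icc.mp (hτ.gammaShift_mem_Icc ht hB hy)).1, (hmono.le_iff_le hy hx).mpr hyx⟩,
        y, hy, rfl⟩
  rw [this, card_image_of_injOn (hmono.injOn.mono fun y hy => (mem_inter.mp hy).2)]

theorem SparseCoSignotope.gammaFun_insert_erase (hτ : SparseCoSignotope ms d p τ)
    (ht : p + d ≤ mt) (hB : τ B = true) {b u : ℕ} (hb : b ∈ B) (hu : u ∉ B.erase b)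
    (hB₂ : τ (insert u (B.erase b)) = true) :
    gammaFun ms mt τ (insert u (B.erase b)) =
      insert (gammaShift ms mt τ (insert u (B.erase b)) u)
        ((gammaFun ms mt τ B).erase (gammaShift ms mt τ B b)) := by
  rw [gammaFun_eq_image, image_insert, hτ.erase_gammaFun ht hB hb]
  congr 1
  refine image_congr fun y hy => gammaShift_congr ?_
  have hy : y ∈ B.erase b := hy
  exact hτ.isRight_iff_of_erase_eq hB₂ hB (mem_insert_self u _) hb (erase_insert hu)
    (mem_insert_of_mem hy) (fun h => hu (h ▸ hy)) (mem_erase.mp hy).1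

end Gamma

section ImageLines

variable {ms mt d p : ℕ} {τ : Finset ℕ → Bool} {B : Finset ℕ} {b x' : ℕ}

theorem SparseCoSignotope.phiFun_insert_of_not_isRight (hτ : SparseCoSignotope ms d p τ)
    (ht : p + d ≤ mt) (hB : τ B = true) (hb : b ∈ B) (hL : ¬ IsRight ms τ B b)
    (hx' : x' ∈ line mt ((gammaFun ms mt τ B).erase (gammaShift ms mt τ B b)))
    (hle : x' ≤ gammaShift ms mt τ B b) :
    phiFun ms mt τ (insert x' ((gammaFun ms mt τ B).erase (gammaShift ms mt τ B b))) = true := by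
  rw [gammaShift_of_not_isRight hL] at hle
  obtain ⟨hx'1, -, hx'C⟩ := mem_line.mp hx'
  have hx'B : x' ∉ B.erase b := by
    intro hmem
    by_cases hR : IsRight ms τ B x'
    · have := hτ.lt_of_not_isRight_of_isRight hB hb (mem_of_mem_erase hmem) hL hR
      omega
    · exact hx'C (hτ.erase_gammaFun ht hB hb ▸
        mem_image.mpr ⟨x', hmem, gammaShift_of_not_isRight hR⟩)
  have hbm := mem_Icc.mp (hτ.isCoSignotope.subset_Icc hB hb)
  have hB₂ : τ (insert x' (B.erase b)) = true :=
    hτ.insert_eq_true_of_not_isRight hB hb hL (mem_line.mpr ⟨hx'1, by omega, hx'B⟩) hle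
  refine phiFun_eq_true_iff.mpr ⟨_, hB₂, ?_⟩
  rw [hτ.gammaFun_insert_erase ht hB hb hx'B hB₂,
    gammaShift_of_not_isRight ((isRight_insert_erase_iff hx'B).not.mpr hL)]

theorem SparseCoSignotope.phiFun_insert_of_isRight (hτ : SparseCoSignotope ms d p τ)
    (ht : p + d ≤ mt) (hB : τ B = true) (hb : b ∈ B) (hR : IsRight ms τ B b)
    (hx' : x' ∈ line mt ((gammaFun ms mt τ B).erase (gammaShift ms mt τ B b)))
    (hle : gammaShift ms mt τ B b ≤ x') :
    phiFun ms mt τ (insert x' ((gammaFun ms mt τ B).erase (gammaShift ms mt τ B b))) = true := by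
  have hg := hτ.gammaShift_add ht hB hb hR
  obtain ⟨-, hx'm, hx'C⟩ := mem_line.mp hx'
  have hbm := mem_Icc.mp (hτ.isCoSignotope.subset_Icc hB hb)
  set u := x' + ms - mt
  have hu : u + mt = x' + ms := by omega
  have huB : u ∉ B.erase b := by
    intro hmem
    by_cases hRu : IsRight ms τ B u
    · refine hx'C (hτ.erase_gammaFun ht hB hb ▸ mem_image.mpr ⟨u, hmem, ?_⟩)
      have := hτ.gammaShift_add ht hB (mem_of_mem_erase hmem) hRu
      omega
    · have := hτ.lt_of_not_isRight_of_isRight hB (mem_of_mem_erase hmem) hb hRu hR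
      have := (mem_erase.mp hmem).1
      omega
  have hB₂ : τ (insert u (B.erase b)) = true :=
    hR.insert_eq_true hτ.isCoSignotope hB hb (mem_line.mpr ⟨by omega, by omega, huB⟩) (by omega)
  refine phiFun_eq_true_iff.mpr ⟨_, hB₂, ?_⟩
  rw [hτ.gammaFun_insert_erase ht hB hb huB hB₂,
    gammaShift_of_isRight ((isRight_insert_erase_iff huB).mpr hR)]
  congr
  omega

end ImageLines

section Preimages

variable {ms mt d p : ℕ} {τ : Finset ℕ → Bool} {B₁ B₂ : Finset ℕ} {u₁ u₂ y₁ y₂ : ℕ}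

/-- Compare the ranks of the common value in `gammaFun B₁` and `gammaFun B₂` with the sizes of
the left run of `y₁` in `B₁` and the right run of `y₂` in `B₂`. -/
theorem SparseCoSignotope.tight_of_gammaShift_eq
    (hτ : SparseCoSignotope ms d p τ) (ht : p + d ≤ mt) (hB₁ : τ B₁ = true) (hB₂ : τ B₂ = true)
    (hu₁ : u₁ ∈ B₁) (hu₂ : u₂ ∈ B₂)
    (hcore : (gammaFun ms mt τ B₁).erase (gammaShift ms mt τ B₁ u₁) =
      (gammaFun ms mt τ B₂).erase (gammaShift ms mt τ B₂ u₂))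
    (hy₁ : y₁ ∈ B₁.erase u₁) (hy₂ : y₂ ∈ B₂.erase u₂) (hL : ¬ IsRight ms τ B₁ y₁)
    (hR : IsRight ms τ B₂ y₂) (heq : gammaShift ms mt τ B₁ y₁ = gammaShift ms mt τ B₂ y₂) :
    gammaShift ms mt τ B₁ u₁ ≤ y₁ ∧ y₁ < gammaShift ms mt τ B₂ u₂ ∧ mt ≤ ms ∧
      plusCount τ < (Icc 1 y₁ \ B₁.erase y₁).card + (Icc y₂ ms \ B₂.erase y₂).card := by
  have hτ' := hτ.isCoSignotope
  have hy₁B₁ := mem_of_mem_erase hy₁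
  have hy₂B₂ := mem_of_mem_erase hy₂
  set C := (gammaFun ms mt τ B₁).erase (gammaShift ms mt τ B₁ u₁)
  have hg₁ : gammaShift ms mt τ B₁ y₁ = y₁ := gammaShift_of_not_isRight hL
  have hadd := hτ.gammaShift_add ht hB₂ hy₂B₂ hR
  rw [← heq, hg₁] at hadd
  have hA₁ : gammaFun ms mt τ B₁ = insert (gammaShift ms mt τ B₁ u₁) C :=
    (insert_erase (mem_image_of_mem _ hu₁)).symm
  have hA₂ : gammaFun ms mt τ B₂ = insert (gammaShift ms mt τ B₂ u₂) C := by
    rw [hcore]; exact (insert_erase (mem_image_of_mem _ hu₂)).symm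
  have hx₁ : gammaShift ms mt τ B₁ u₁ ∉ C := notMem_erase _ _
  have hx₂ : gammaShift ms mt τ B₂ u₂ ∉ C := hcore ▸ notMem_erase _ _
  have hrank₁ := hτ.card_Icc_inter_gammaFun ht hB₁ hy₁B₁
  rw [hg₁, hA₁, card_Icc_inter_insert hx₁
    (mem_Icc.mp (hτ.gammaShift_mem_Icc ht hB₁ hu₁)).1] at hrank₁
  have hrank₂ := hτ.card_Icc_inter_gammaFun ht hB₂ hy₂B₂
  rw [← heq, hg₁, hA₂, card_Icc_inter_insert hx₂
    (mem_Icc.mp (hτ.gammaShift_mem_Icc ht hB₂ hu₂)).1] at hrank₂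
  have hne : B₁.erase y₁ ≠ B₂.erase y₂ := fun h => hL (by rw [IsRight, h]; exact hR)
  have := card_sdiff_add_card_sdiff_le hτ'.finite_setOf (by
    rw [card_erase_of_mem hy₁B₁, card_erase_of_mem hy₂B₂, hτ'.card_eq hB₁, hτ'.card_eq hB₂])
    hne (hτ.forall_Icc_sdiff_of_not_isRight hB₁ hy₁B₁ hL) (hR.forall_Icc_sdiff hτ' hB₂ hy₂B₂)
  have := hτ'.card_Icc_sdiff_left hB₁ hy₁B₁
  have := hτ'.card_Icc_sdiff_right hB₂ hy₂B₂
  have := card_Icc_inter_add_card_Icc_inter (hτ'.subset_Icc hB₂) hy₂B₂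
  have := hτ'.card_eq hB₂
  have := mem_Icc.mp (hτ'.subset_Icc hB₂ hy₂B₂)
  have := hτ.plusCount_le
  have := hτ.add_le
  split_ifs at hrank₁ hrank₂ <;> omega

/-- Exchanging through a set common to the two runs moves `u₂` into `B₁` without changing its
alignment, so `gammaShift B₂ u₂` would be a second new value of `gammaFun B₁`. -/
theorem SparseCoSignotope.gammaShift_ne_of_not_isRight_of_isRight
    (hτ : SparseCoSignotope ms d p τ) (ht : p + d ≤ mt) (hB₁ : τ B₁ = true) (hB₂ : τ B₂ = true)
    (hu₁ : u₁ ∈ B₁) (hu₂ : u₂ ∈ B₂)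
    (hcore : (gammaFun ms mt τ B₁).erase (gammaShift ms mt τ B₁ u₁) =
      (gammaFun ms mt τ B₂).erase (gammaShift ms mt τ B₂ u₂))
    (hy₁ : y₁ ∈ B₁.erase u₁) (hy₂ : y₂ ∈ B₂.erase u₂) (hL : ¬ IsRight ms τ B₁ y₁)
    (hR : IsRight ms τ B₂ y₂) : gammaShift ms mt τ B₁ y₁ ≠ gammaShift ms mt τ B₂ y₂ := by
  intro heq
  obtain ⟨hx₁, hx₂, hmt, hlt⟩ :=
    hτ.tight_of_gammaShift_eq ht hB₁ hB₂ hu₁ hu₂ hcore hy₁ hy₂ hL hR heq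
  obtain ⟨hy₁u₁, hy₁B₁⟩ := mem_erase.mp hy₁
  obtain ⟨hy₂u₂, hy₂B₂⟩ := mem_erase.mp hy₂
  have hleft := hτ.forall_Icc_sdiff_of_not_isRight hB₁ hy₁B₁ hL
  obtain ⟨w, hw, w', hw', hX⟩ := exists_insert_eq_insert_of_plusCount_lt
    hτ.isCoSignotope.finite_setOf hleft (hR.forall_Icc_sdiff hτ.isCoSignotope hB₂ hy₂B₂) hlt
  have hwy₁ : w ≤ y₁ := (mem_Icc.mp (mem_sdiff.mp hw).1).2
  have hw'B₂ : w' ∉ B₂.erase y₂ := (mem_sdiff.mp hw').2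
  have hshift : gammaShift ms mt τ B₂ u₂ ≤ u₂ := by
    by_cases hRu : IsRight ms τ B₂ u₂
    · rw [gammaShift_of_isRight hRu]; omega
    · rw [gammaShift_of_not_isRight hRu]
  have hu₂w : u₂ ≠ w := by omega
  have hu₂X : u₂ ∈ insert w (B₁.erase y₁) :=
    hX ▸ mem_insert_of_mem (mem_erase.mpr ⟨hy₂u₂.symm, hu₂⟩)
  have hu₂B₁ : u₂ ∈ B₁.erase y₁ := (mem_insert.mp hu₂X).resolve_left hu₂w
  have hswap₂ := hτ.isRight_iff_of_erase_eq hB₂ (hleft w hw) hy₂B₂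
    (by rw [hX]; exact mem_insert_self w' _) (by rw [hX, erase_insert hw'B₂]) hu₂
    hy₂u₂.symm (by rintro rfl; exact hw'B₂ (mem_erase.mpr ⟨hy₂u₂.symm, hu₂⟩))
  have hswap₁ := hτ.isRight_iff_of_erase_eq (hleft w hw) hB₁ (mem_insert_self w _) hy₁B₁
    (erase_insert (mem_sdiff.mp hw).2) hu₂X hu₂w (mem_erase.mp hu₂B₁).1
  have hmem : gammaShift ms mt τ B₂ u₂ ∈ gammaFun ms mt τ B₁ := by
    rw [gammaShift_congr (hswap₂.trans hswap₁)]
    exact mem_image_of_mem _ (mem_of_mem_erase hu₂B₁)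
  rw [← insert_erase (s := gammaFun ms mt τ B₁) (a := gammaShift ms mt τ B₁ u₁)
    (mem_image_of_mem _ hu₁), hcore, mem_insert] at hmem
  rcases hmem with h | h
  · omega
  · exact notMem_erase _ _ h

theorem SparseCoSignotope.eq_of_gammaShift_eq (hτ : SparseCoSignotope ms d p τ)
    (ht : p + d ≤ mt) (hB₁ : τ B₁ = true) (hB₂ : τ B₂ = true) (hu₁ : u₁ ∈ B₁) (hu₂ : u₂ ∈ B₂)
    (hcore : (gammaFun ms mt τ B₁).erase (gammaShift ms mt τ B₁ u₁) =
      (gammaFun ms mt τ B₂).erase (gammaShift ms mt τ B₂ u₂))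
    (hy₁ : y₁ ∈ B₁.erase u₁) (hy₂ : y₂ ∈ B₂.erase u₂)
    (heq : gammaShift ms mt τ B₁ y₁ = gammaShift ms mt τ B₂ y₂) : y₁ = y₂ := by
  by_cases hR₁ : IsRight ms τ B₁ y₁ <;> by_cases hR₂ : IsRight ms τ B₂ y₂
  · have := hτ.gammaShift_add ht hB₁ (mem_of_mem_erase hy₁) hR₁
    have := hτ.gammaShift_add ht hB₂ (mem_of_mem_erase hy₂) hR₂
    omega
  · exact absurd heq.symm (hτ.gammaShift_ne_of_not_isRight_of_isRight ht hB₂ hB₁ hu₂ hu₁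
      hcore.symm hy₂ hy₁ hR₂ hR₁)
  · exact absurd heq (hτ.gammaShift_ne_of_not_isRight_of_isRight ht hB₁ hB₂ hu₁ hu₂
      hcore hy₁ hy₂ hR₁ hR₂)
  · rwa [gammaShift_of_not_isRight hR₁, gammaShift_of_not_isRight hR₂] at heq

theorem SparseCoSignotope.erase_eq_of_erase_gammaFun_eq (hτ : SparseCoSignotope ms d p τ)
    (ht : p + d ≤ mt) (hB₁ : τ B₁ = true) (hB₂ : τ B₂ = true) (hu₁ : u₁ ∈ B₁) (hu₂ : u₂ ∈ B₂)
    (hcore : (gammaFun ms mt τ B₁).erase (gammaShift ms mt τ B₁ u₁) =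
      (gammaFun ms mt τ B₂).erase (gammaShift ms mt τ B₂ u₂)) :
    B₁.erase u₁ = B₂.erase u₂ := by
  refine eq_of_subset_of_card_le (fun y hy => ?_) (by
    rw [card_erase_of_mem hu₁, card_erase_of_mem hu₂, hτ.isCoSignotope.card_eq hB₁,
      hτ.isCoSignotope.card_eq hB₂])
  have : gammaShift ms mt τ B₁ y ∈ (B₂.erase u₂).image (gammaShift ms mt τ B₂) := by
    rw [← hτ.erase_gammaFun ht hB₂ hu₂, ← hcore, hτ.erase_gammaFun ht hB₁ hu₁]
    exact mem_image_of_mem _ hy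
  obtain ⟨y₂, hy₂, hg⟩ := mem_image.mp this
  rwa [hτ.eq_of_gammaShift_eq ht hB₁ hB₂ hu₁ hu₂ hcore hy hy₂ hg.symm]

end Preimages

theorem SparseCoSignotope.phiFun_insert_of_lt_of_lt {ms mt d p : ℕ} {τ : Finset ℕ → Bool}
    (hτ : SparseCoSignotope ms d p τ) (ht : p + d ≤ mt) {C : Finset ℕ} {x₁ x₂ x₃ : ℕ}
    (h₁ : phiFun ms mt τ (insert x₁ C) = true) (h₃ : phiFun ms mt τ (insert x₃ C) = true)
    (hx₁ : x₁ ∉ C) (hx₂ : x₂ ∉ C) (hx₃ : x₃ ∉ C) (h₁₂ : x₁ < x₂) (h₂₃ : x₂ < x₃) :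
    phiFun ms mt τ (insert x₂ C) = true := by
  obtain ⟨B₁, hB₁, hA₁⟩ := phiFun_eq_true_iff.mp h₁
  obtain ⟨B₃, hB₃, hA₃⟩ := phiFun_eq_true_iff.mp h₃
  obtain ⟨u₁, hu₁, hg₁⟩ : ∃ u ∈ B₁, gammaShift ms mt τ B₁ u = x₁ :=
    mem_image.mp (by rw [← gammaFun_eq_image, ← hA₁]; exact mem_insert_self x₁ C)
  obtain ⟨u₃, hu₃, hg₃⟩ : ∃ u ∈ B₃, gammaShift ms mt τ B₃ u = x₃ :=
    mem_image.mp (by rw [← gammaFun_eq_image, ← hA₃]; exact mem_insert_self x₃ C)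
  have hC₁ : (gammaFun ms mt τ B₁).erase (gammaShift ms mt τ B₁ u₁) = C := by
    rw [hg₁, ← hA₁, erase_insert hx₁]
  have hC₃ : (gammaFun ms mt τ B₃).erase (gammaShift ms mt τ B₃ u₃) = C := by
    rw [hg₃, ← hA₃, erase_insert hx₃]
  have hsame : IsRight ms τ B₁ u₁ ↔ IsRight ms τ B₃ u₃ := by
    rw [IsRight, IsRight,
      hτ.erase_eq_of_erase_gammaFun_eq ht hB₁ hB₃ hu₁ hu₃ (hC₁.trans hC₃.symm)]
  have := mem_Icc.mp (hτ.gammaShift_mem_Icc ht hB₁ hu₁)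
  have := mem_Icc.mp (hτ.gammaShift_mem_Icc ht hB₃ hu₃)
  have hx₂C : x₂ ∈ line mt C := mem_line.mpr ⟨by omega, by omega, hx₂⟩
  by_cases hR : IsRight ms τ B₁ u₁
  · simpa only [hC₁] using hτ.phiFun_insert_of_isRight ht hB₁ hu₁ hR (hC₁ ▸ hx₂C) (by omega)
  · simpa only [hC₃] using hτ.phiFun_insert_of_not_isRight ht hB₃ hu₃ (hsame.not.mp hR)
      (hC₃ ▸ hx₂C) (by omega)

section Phi

variable {ms mt d p : ℕ} {τ σ : Finset ℕ → Bool}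

theorem setOf_phiFun_eq_image (ms mt : ℕ) (τ : Finset ℕ → Bool) :
    {A | phiFun ms mt τ A = true} = gammaFun ms mt τ '' {B | τ B = true} := by
  ext A
  exact phiFun_eq_true_iff.trans
    ⟨fun ⟨B, hB, h⟩ => ⟨B, hB, h.symm⟩, fun ⟨B, hB, h⟩ => ⟨B, hB, h.symm⟩⟩

theorem IsCoSignotope.plusCount_phiFun_le (hτ : IsCoSignotope ms d τ) :
    plusCount (phiFun ms mt τ) ≤ plusCount τ := by
  rw [plusCount, plusCount, setOf_phiFun_eq_image]
  exact Set.ncard_image_le hτ.finite_setOf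

/-- A line is filled between two `+`-subsets by `phiFun_insert_of_lt_of_lt`, and from a
`+`-subset towards the end its preimage is aligned with. -/
theorem SparseCoSignotope.isCoSignotope_phiFun (hτ : SparseCoSignotope ms d p τ)
    (ht : p + d ≤ mt) : IsCoSignotope mt d (phiFun ms mt τ) := by
  refine ⟨fun A hA => ?_, fun B' _ _ b' _ => signChanges_series_le_one_iff.mpr ?_⟩
  · obtain ⟨B, hB, rfl⟩ := phiFun_eq_true_iff.mp hA
    exact ⟨hτ.gammaFun_subset_Icc ht hB, hτ.card_gammaFun ht hB⟩
  intro x hx y hy z hz hxy hyz hxz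
  set C := B'.erase b'
  cases hφx : phiFun ms mt τ (insert x C)
  · by_contra hφy
    rw [Bool.not_eq_false] at hφy
    obtain ⟨B, hB, hA⟩ := phiFun_eq_true_iff.mp hφy
    obtain ⟨u, hu, hg⟩ : ∃ u ∈ B, gammaShift ms mt τ B u = y :=
      mem_image.mp (by rw [← gammaFun_eq_image, ← hA]; exact mem_insert_self y C)
    have hC : (gammaFun ms mt τ B).erase (gammaShift ms mt τ B u) = C := by
      rw [hg, ← hA, erase_insert (mem_line.mp hy).2.2]
    by_cases hR : IsRight ms τ B u
    · have := hτ.phiFun_insert_of_isRight ht hB hu hR (hC ▸ hz) (by omega)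
      rw [hC, ← hxz, hφx] at this
      exact Bool.false_ne_true this
    · have := hτ.phiFun_insert_of_not_isRight ht hB hu hR (hC ▸ hx) (by omega)
      rw [hC, hφx] at this
      exact Bool.false_ne_true this
  · exact hτ.phiFun_insert_of_lt_of_lt ht hφx (hxz ▸ hφx) (mem_line.mp hx).2.2
      (mem_line.mp hy).2.2 (mem_line.mp hz).2.2 hxy hyz

theorem SparseCoSignotope.sparseCoSignotope_phiFun (hτ : SparseCoSignotope ms d p τ)
    (ht : p + d ≤ mt) :
    SparseCoSignotope mt d p (phiFun ms mt τ) :=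
  ⟨hτ.isCoSignotope_phiFun ht, hτ.isCoSignotope.plusCount_phiFun_le.trans hτ.plusCount_le, ht⟩

theorem SparseCoSignotope.isRight_phiFun_iff (hτ : SparseCoSignotope ms d p τ)
    (ht : p + d ≤ mt) {B : Finset ℕ} (hB : τ B = true) {b : ℕ} (hb : b ∈ B) :
    IsRight mt (phiFun ms mt τ) (gammaFun ms mt τ B) (gammaShift ms mt τ B b) ↔
      IsRight ms τ B b := by
  have hφ := hτ.sparseCoSignotope_phiFun ht
  have hA : phiFun ms mt τ (gammaFun ms mt τ B) = true := phiFun_eq_true_iff.mpr ⟨B, hB, rfl⟩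
  have hgb : gammaShift ms mt τ B b ∈ gammaFun ms mt τ B := mem_image_of_mem _ hb
  have hline := hφ.isCoSignotope.mem_line_erase hA hgb
  have hne : (line mt ((gammaFun ms mt τ B).erase (gammaShift ms mt τ B b))).Nonempty :=
    ⟨_, hline⟩
  by_cases hR : IsRight ms τ B b
  · simp only [hR, iff_true, hφ.isRight_iff hA hgb hne]
    exact hτ.phiFun_insert_of_isRight ht hB hb hR (max'_mem _ hne) (le_max' _ _ hline)
  · simp only [hR, iff_false, hφ.not_isRight_iff hA hgb hne]
    exact hτ.phiFun_insert_of_not_isRight ht hB hb hR (min'_mem _ hne) (min'_le _ _ hline)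

theorem SparseCoSignotope.gammaFun_phiFun_gammaFun (hτ : SparseCoSignotope ms d p τ)
    (ht : p + d ≤ mt) {B : Finset ℕ} (hB : τ B = true) :
    gammaFun mt ms (phiFun ms mt τ) (gammaFun ms mt τ B) = B := by
  have key : ∀ b ∈ B, gammaShift mt ms (phiFun ms mt τ) (gammaFun ms mt τ B)
      (gammaShift ms mt τ B b) = b := by
    intro b hb
    by_cases hR : IsRight ms τ B b
    · have := hτ.gammaShift_add ht hB hb hR
      rw [gammaShift_of_isRight ((hτ.isRight_phiFun_iff ht hB hb).mpr hR)]
      omega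
    · rw [gammaShift_of_not_isRight ((hτ.isRight_phiFun_iff ht hB hb).not.mpr hR),
        gammaShift_of_not_isRight hR]
  calc gammaFun mt ms (phiFun ms mt τ) (gammaFun ms mt τ B)
      = (B.image (gammaShift ms mt τ B)).image
          (gammaShift mt ms (phiFun ms mt τ) (gammaFun ms mt τ B)) := rfl
    _ = B.image id := by rw [image_image]; exact image_congr key
    _ = B := image_id

theorem SparseCoSignotope.phiFun_phiFun (hτ : SparseCoSignotope ms d p τ) (ht : p + d ≤ mt) :
    phiFun mt ms (phiFun ms mt τ) = τ := by
  funext A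
  refine Bool.coe_iff_coe.mp ⟨fun h => ?_, fun hA => ?_⟩
  · obtain ⟨A', hA', rfl⟩ := phiFun_eq_true_iff.mp h
    obtain ⟨B, hB, rfl⟩ := phiFun_eq_true_iff.mp hA'
    rwa [hτ.gammaFun_phiFun_gammaFun ht hB]
  · exact phiFun_eq_true_iff.mpr ⟨_, phiFun_eq_true_iff.mpr ⟨A, hA, rfl⟩,
      (hτ.gammaFun_phiFun_gammaFun ht hA).symm⟩

theorem SparseCoSignotope.plusCount_phiFun (hτ : SparseCoSignotope ms d p τ) (ht : p + d ≤ mt) :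
    plusCount (phiFun ms mt τ) = plusCount τ := by
  refine le_antisymm hτ.isCoSignotope.plusCount_phiFun_le ?_
  have := (hτ.sparseCoSignotope_phiFun ht).isCoSignotope.plusCount_phiFun_le (mt := ms)
  rwa [hτ.phiFun_phiFun ht] at this

theorem SparseCoSignotope.isRight_iff_of_le {m : ℕ} (hτ : SparseCoSignotope m d p τ)
    (hσ : SparseCoSignotope m d p σ) (hle : ∀ A, τ A = true → σ A = true) {B : Finset ℕ}
    (hB : τ B = true) {b : ℕ} (hb : b ∈ B) : IsRight m τ B b ↔ IsRight m σ B b := by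
  have hne : (line m (B.erase b)).Nonempty := ⟨b, hτ.isCoSignotope.mem_line_erase hB hb⟩
  refine ⟨fun hR => ?_, fun hR => ?_⟩
  · exact (hσ.isRight_iff (hle B hB) hb hne).mpr (hle _ ((hτ.isRight_iff hB hb hne).mp hR))
  · by_contra hL
    exact (hσ.not_isRight_iff (hle B hB) hb hne).mpr
      (hle _ ((hτ.not_isRight_iff hB hb hne).mp hL)) hR

theorem SingleStep.map_phiFun (h : SingleStep τ σ) (hτ : SparseCoSignotope ms d p τ)
    (hσ : SparseCoSignotope ms d p σ) (ht : p + d ≤ mt) :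
    SingleStep (phiFun ms mt τ) (phiFun ms mt σ) := by
  obtain ⟨hss, hcount⟩ := h
  have hle : ∀ A, τ A = true → σ A = true := fun A hA => hss.subset hA
  have hsub : {A | phiFun ms mt τ A = true} ⊆ {A | phiFun ms mt σ A = true} := by
    intro A hA
    obtain ⟨B, hB, rfl⟩ := phiFun_eq_true_iff.mp hA
    refine phiFun_eq_true_iff.mpr ⟨B, hle B hB, ?_⟩
    rw [gammaFun_eq_image, gammaFun_eq_image]
    exact image_congr fun b hb => gammaShift_congr (hτ.isRight_iff_of_le hσ hle hB hb)
  have hcount' : plusCount (phiFun ms mt σ) = plusCount (phiFun ms mt τ) + 1 := by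
    rw [hτ.plusCount_phiFun ht, hσ.plusCount_phiFun ht, hcount]
  refine ⟨hsub.ssubset_of_ne fun heq => ?_, hcount'⟩
  rw [plusCount, plusCount, heq] at hcount'
  omega

theorem CoBruhatLe.map_phiFun {σ σ' : Finset ℕ → Bool} (h : CoBruhatLe ms d σ σ')
    (hσ' : plusCount σ' ≤ p) (hs : p + d ≤ ms) (ht : p + d ≤ mt) :
    CoBruhatLe mt d (phiFun ms mt σ) (phiFun ms mt σ') := by
  induction h with
  | refl => exact .refl
  | @tail ρ ρ' _ hstep ih =>
    obtain ⟨hρ, hρ', hρρ'⟩ := hstep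
    have hρp : plusCount ρ ≤ p := by have := hρρ'.2; omega
    have hsparse : SparseCoSignotope ms d p ρ := ⟨hρ, hρp, hs⟩
    have hsparse' : SparseCoSignotope ms d p ρ' := ⟨hρ', hσ', hs⟩
    exact (ih hρp).tail ⟨hsparse.isCoSignotope_phiFun ht, hsparse'.isCoSignotope_phiFun ht,
      hρρ'.map_phiFun hsparse hsparse' ht⟩

end Phi

theorem phiFun_mem_coSigSetLe {n tn d p : ℕ} {τ : Finset ℕ → Bool} (hτ : τ ∈ coSigSetLe n d p)
    (hn : p + d ≤ n) (htn : p + d ≤ tn) : phiFun n tn τ ∈ coSigSetLe tn d p :=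
  have hτ' : SparseCoSignotope n d p τ := ⟨hτ.1, hτ.2, hn⟩
  ⟨hτ'.isCoSignotope_phiFun htn, (hτ'.plusCount_phiFun htn).trans_le hτ.2⟩

theorem statement1_general (n tn d p : ℕ) (hpn : p + d ≤ n) (hptn : p + d ≤ tn) :
    ∃ Φ : ↥(coSigSetLe n d p) ≃ ↥(coSigSetLe tn d p),
      ∀ σ σ' : ↥(coSigSetLe n d p),
        CoBruhatLe n d σ.1 σ'.1 ↔ CoBruhatLe tn d (Φ σ).1 (Φ σ').1 := by
  have hinv : ∀ {m m' : ℕ}, p + d ≤ m → p + d ≤ m' → ∀ τ : coSigSetLe m d p,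
      phiFun m' m (phiFun m m' τ) = τ :=
    fun hm hm' τ => (SparseCoSignotope.mk τ.2.1 τ.2.2 hm).phiFun_phiFun hm'
  let Φ : coSigSetLe n d p ≃ coSigSetLe tn d p :=
    { toFun := fun τ => ⟨phiFun n tn τ, phiFun_mem_coSigSetLe τ.2 hpn hptn⟩
      invFun := fun τ => ⟨phiFun tn n τ, phiFun_mem_coSigSetLe τ.2 hptn hpn⟩
      left_inv := fun τ => Subtype.ext (hinv hpn hptn τ)
      right_inv := fun τ => Subtype.ext (hinv hptn hpn τ) }
  refine ⟨Φ, fun σ σ' => ⟨fun h => h.map_phiFun σ'.2.2 hpn hptn, fun h => ?_⟩⟩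
  simpa only [Φ, Equiv.coe_fn_mk, hinv hpn hptn] using h.map_phiFun (Φ σ').2.2 hptn hpn

/-- **Theorem (main bijection, co-signotope form).** For `0 ≤ d < min {n, ñ}` and
`0 ≤ p ≤ min {n, ñ} - d`, there is a bijection between `𝒮̄_{≤p}(n,d)` and
`𝒮̄_{≤p}(ñ,d)` preserving the complementary higher Bruhat order. -/
theorem statement1 (n tn d p : ℕ) (hdn : d < n) (hdtn : d < tn)
    (hpn : p + d ≤ n) (hptn : p + d ≤ tn) :
    ∃ Φ : ↥(coSigSetLe n d p) ≃ ↥(coSigSetLe tn d p),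
      ∀ σ σ' : ↥(coSigSetLe n d p),
        CoBruhatLe n d σ.1 σ'.1 ↔ CoBruhatLe tn d (Φ σ).1 (Φ σ').1 :=
  statement1_general n tn d p hpn hptn
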